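/- Let q > 0, κ ≥ 0 and δ > 0 be constants, let ξ : ℝ → ℝⁿ be continuous with ‖ξ(t)‖² ≥ κ/q + δ for all t ≥ 0, and let ϑ : ℝ → ℝ be differentiable with ϑ'(t) = q·‖ξ(t)‖² for all t ≥ 0. Then for every constant C ∈ ℝ there exists t₁ ≥ 0 such that for all t ≥ t₁, exp(ϑ(t)) ≥ C + exp(κ t). -/

import Mathlib

/-- if the adaptive law `ϑ' = q‖ξ‖²` holds with `‖ξ(t)‖² ≥ κ/q + δ` for
`t ≥ 0`, then for any constant `C` there is `t₁ ≥ 0` such that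
`exp(ϑ(t)) ≥ C + exp(κt)` for all `t ≥ t₁`. -/
theorem adaptive_gain_dominates {n : ℕ}
    (q κ δ : ℝ) (hq : 0 < q) (hκ : 0 ≤ κ) (hδ : 0 < δ)
    (ξ : ℝ → EuclideanSpace ℝ (Fin n)) (hξc : Continuous ξ)
    (hξ : ∀ t : ℝ, 0 ≤ t → κ / q + δ ≤ ‖ξ t‖ ^ 2)
    (ϑ : ℝ → ℝ) (hϑdiff : Differentiable ℝ ϑ)
    (hϑ : ∀ t : ℝ, 0 ≤ t → deriv ϑ t = q * ‖ξ t‖ ^ 2) :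
    ∀ C : ℝ, ∃ t₁ : ℝ, 0 ≤ t₁ ∧ ∀ t : ℝ, t₁ ≤ t →
      C + Real.exp (κ * t) ≤ Real.exp (ϑ t) := by
  intro C
  -- linear lower bound on ϑ
  have key : ∀ t : ℝ, 0 ≤ t → ϑ 0 + (κ + q * δ) * t ≤ ϑ t := by
    intro t ht
    set g : ℝ → ℝ := fun s => ϑ s - (κ + q * δ) * s with hg
    have hmono : MonotoneOn g (Set.Ici (0 : ℝ)) := by
      apply monotoneOn_of_deriv_nonneg (convex_Ici 0)
      · exact ((hϑdiff.continuous.sub (continuous_const.mul continuous_id)).continuousOn)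
      · intro s hs
        exact (hϑdiff.sub ((differentiable_const _).mul differentiable_id)) s |>.differentiableWithinAt
      · intro s hs
        have hs0 : (0 : ℝ) ≤ s := le_of_lt (Set.mem_Ioi.mp (by simpa using hs))
        have : deriv g s = deriv ϑ s - (κ + q * δ) := by
          have h1 : HasDerivAt (fun s : ℝ => (κ + q * δ) * s) (κ + q * δ) s := by
            simpa using (hasDerivAt_id s).const_mul (κ + q * δ)
          have h2 : HasDerivAt ϑ (deriv ϑ s) s := (hϑdiff s).hasDerivAt
          exact (h2.sub h1).deriv
        rw [this, hϑ s hs0]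
        have := hξ s hs0
        nlinarith [mul_le_mul_of_nonneg_left this (le_of_lt hq), hq.le,
          mul_div_cancel₀ κ (ne_of_gt hq)]
    have := hmono (Set.self_mem_Ici) (Set.mem_Ici.mpr ht) ht
    simp only [hg] at this
    linarith [this]
  -- choose t₁
  obtain ⟨T, hT⟩ : ∃ T : ℝ, 0 ≤ T ∧ Real.log (max (C + 1) 1) ≤ ϑ 0 + q * δ * T := by
    refine ⟨max 0 ((Real.log (max (C + 1) 1) - ϑ 0) / (q * δ)), le_max_left _ _, ?_⟩
    have hqδ : 0 < q * δ := mul_pos hq hδ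
    have h1 : (Real.log (max (C + 1) 1) - ϑ 0) / (q * δ) ≤
        max 0 ((Real.log (max (C + 1) 1) - ϑ 0) / (q * δ)) := le_max_right _ _
    nlinarith [mul_le_mul_of_nonneg_left h1 hqδ.le,
      mul_div_cancel₀ (Real.log (max (C + 1) 1) - ϑ 0) (ne_of_gt hqδ)]
  refine ⟨T, hT.1, fun t ht => ?_⟩
  have ht0 : (0 : ℝ) ≤ t := le_trans hT.1 ht
  have hϑt : ϑ 0 + (κ + q * δ) * t ≤ ϑ t := key t ht0
  have hE : C + 1 ≤ Real.exp (ϑ 0 + q * δ * t) := by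
    have h1 : Real.log (max (C + 1) 1) ≤ ϑ 0 + q * δ * t := by
      have : q * δ * T ≤ q * δ * t := by
        exact mul_le_mul_of_nonneg_left ht (mul_pos hq hδ).le
      linarith [hT.2]
    have h2 : max (C + 1) 1 ≤ Real.exp (ϑ 0 + q * δ * t) := by
      have := Real.exp_le_exp.mpr h1
      rwa [Real.exp_log (lt_of_lt_of_le zero_lt_one (le_max_right _ _))] at this
    exact le_trans (le_max_left _ _) h2
  have hE1 : 1 ≤ Real.exp (ϑ 0 + q * δ * t) := by
    have h1 : (0:ℝ) ≤ ϑ 0 + q * δ * t - Real.log (max (C + 1) 1) := by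
      have : q * δ * T ≤ q * δ * t := mul_le_mul_of_nonneg_left ht (mul_pos hq hδ).le
      linarith [hT.2]
    have h2 : (0:ℝ) ≤ Real.log (max (C + 1) 1) :=
      Real.log_nonneg (le_max_right _ _)
    simpa using Real.one_le_exp (by linarith)
  have hκt : 1 ≤ Real.exp (κ * t) := Real.one_le_exp (mul_nonneg hκ ht0)
  have hprod : Real.exp (κ * t) * Real.exp (ϑ 0 + q * δ * t) ≤ Real.exp (ϑ t) := by
    rw [← Real.exp_add]
    apply Real.exp_le_exp.mpr
    ring_nf
    nlinarith [hϑt]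
  rcases le_or_gt C 0 with hC | hC
  · nlinarith [Real.exp_pos (κ * t), mul_le_mul_of_nonneg_left hE1 (Real.exp_pos (κ * t)).le]
  · nlinarith [mul_le_mul_of_nonneg_left hE (Real.exp_pos (κ * t)).le,
      mul_le_mul_of_nonneg_right hκt (by linarith : (0:ℝ) ≤ C)]
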